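/- If u : [0,1]² → ℝ is Lipschitz with constant C, then every detail coefficient satisfies |d_{(i,j),e,l}| ≤ C·√2·2^{−(l+1)} for all e ∈ {0,1}² \ {(0,0)} (cancellation property: details decay geometrically with the level l). -/

import Mathlib

open MeasureTheory

/-- Scaling function `φ_{(i,j),l}(x) = 2^{2l} χ_{[0,1]²}(2^l x₁ - i, 2^l x₂ - j)`. -/
noncomputable def scalingFun (l i j : ℕ) (x : ℝ × ℝ) : ℝ :=
  2 ^ (2 * l) *
    Set.indicator (Set.Icc (0 : ℝ) 1 ×ˢ Set.Icc (0 : ℝ) 1) (fun _ => (1 : ℝ))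
      (2 ^ l * x.1 - i, 2 ^ l * x.2 - j)

/-- Haar-type wavelet `ψ_{(i,j),e,l} = Σ_{a∈{0,1}²} 2^{-2} (-1)^{a·e} φ_{2(i,j)+a,l+1}`. -/
noncomputable def waveletFun (l i j : ℕ) (e : ℕ × ℕ) (x : ℝ × ℝ) : ℝ :=
  ∑ a ∈ (({0, 1} : Finset ℕ) ×ˢ ({0, 1} : Finset ℕ)),
    (1 / 4 : ℝ) * (-1 : ℝ) ^ (a.1 * e.1 + a.2 * e.2) *
      scalingFun (l + 1) (2 * i + a.1) (2 * j + a.2) x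

/-!
The wavelet `ψ_{(i,j),e,l}` is a combination of the four scaling functions of the children of
`V_{(i,j),l}` with weights `±1/4` summing to zero, so `∫ u ψ = Σ ±¼ (ū_a - u(x₀))` for the centre
`x₀` of `V_{(i,j),l}`. Each `ū_a` is an average of `u` over a subsquare of `V_{(i,j),l}`, which lies
within distance `2^{-(l+1)}` of `x₀` (in the sup metric of `ℝ × ℝ`), hence `|ū_a - u(x₀)| ≤ C 2^{-(l+1)}`.
-/

open Set Metric

theorem abs_integral_mul_sub_le_of_integral_eq_one {α : Type*} [MeasurableSpace α]
    {μ : Measure α} {u φ : α → ℝ} {c M : ℝ}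
    (hφ_nonneg : ∀ x, 0 ≤ φ x) (hφ : Integrable φ μ) (hφ_one : ∫ x, φ x ∂μ = 1)
    (huφ : Integrable (fun x => u x * φ x) μ) (hu : ∀ x, φ x ≠ 0 → |u x - c| ≤ M) :
    |∫ x, u x * φ x ∂μ - c| ≤ M := by
  have hsub : ∫ x, u x * φ x ∂μ - c = ∫ x, (u x - c) * φ x ∂μ := by
    simp_rw [sub_mul]
    rw [integral_sub huφ (hφ.const_mul c), integral_const_mul, hφ_one, mul_one]
  have hpointwise : ∀ x, ‖(u x - c) * φ x‖ ≤ M * φ x := fun x => by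
    rw [norm_mul, Real.norm_eq_abs, Real.norm_of_nonneg (hφ_nonneg x)]
    rcases eq_or_ne (φ x) 0 with h | h
    · simp [h]
    · exact mul_le_mul_of_nonneg_right (hu x h) (hφ_nonneg x)
  rw [hsub, ← Real.norm_eq_abs]
  calc ‖∫ x, (u x - c) * φ x ∂μ‖ ≤ ∫ x, M * φ x ∂μ :=
        norm_integral_le_of_norm_le (hφ.const_mul M) (Filter.Eventually.of_forall hpointwise)
    _ = M := by rw [integral_const_mul, hφ_one, mul_one]

theorem abs_sum_mul_le_of_sum_eq_zero {ι : Type*} (s : Finset ι) {w v : ι → ℝ} {c M : ℝ}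
    (hw : ∑ a ∈ s, w a = 0) (hv : ∀ a ∈ s, |v a - c| ≤ M) :
    |∑ a ∈ s, w a * v a| ≤ (∑ a ∈ s, |w a|) * M := by
  have hshift : ∑ a ∈ s, w a * v a = ∑ a ∈ s, w a * (v a - c) := by
    simp only [mul_sub, Finset.sum_sub_distrib, ← Finset.sum_mul, hw, zero_mul, sub_zero]
  rw [hshift, Finset.sum_mul]
  refine (Finset.abs_sum_le_sum_abs _ _).trans (Finset.sum_le_sum fun a ha => ?_)
  rw [abs_mul]
  exact mul_le_mul_of_nonneg_left (hv a ha) (abs_nonneg _)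

/-- The dyadic square `V_{(i,j),l}`. -/
def dyadicSquare (l i j : ℕ) : Set (ℝ × ℝ) :=
  Icc ((i : ℝ) / 2 ^ l) ((i + 1) / 2 ^ l) ×ˢ Icc ((j : ℝ) / 2 ^ l) ((j + 1) / 2 ^ l)

noncomputable def dyadicCenter (l i j : ℕ) : ℝ × ℝ :=
  ((2 * i + 1) / 2 ^ (l + 1), (2 * j + 1) / 2 ^ (l + 1))

theorem measurableSet_dyadicSquare (l i j : ℕ) : MeasurableSet (dyadicSquare l i j) :=
  measurableSet_Icc.prod measurableSet_Icc

theorem isCompact_dyadicSquare (l i j : ℕ) : IsCompact (dyadicSquare l i j) :=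
  isCompact_Icc.prod isCompact_Icc

theorem volume_real_dyadicSquare (l i j : ℕ) :
    volume.real (dyadicSquare l i j) = 1 / 2 ^ l * (1 / 2 ^ l) := by
  have hside : ∀ n : ℕ, ((n : ℝ) + 1) / 2 ^ l - n / 2 ^ l = 1 / 2 ^ l := fun n => by ring
  rw [dyadicSquare, Measure.volume_eq_prod, measureReal_def, Measure.prod_prod,
    Real.volume_Icc, Real.volume_Icc, hside, hside, ← ENNReal.ofReal_mul (by positivity),
    ENNReal.toReal_ofReal (by positivity)]

-- In the sup metric of `ℝ × ℝ` a square is a closed ball.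
theorem dyadicSquare_eq_closedBall (l i j : ℕ) :
    dyadicSquare l i j = closedBall (dyadicCenter l i j) (1 / 2 ^ (l + 1)) := by
  rw [dyadicCenter, ← closedBall_prod_same, Real.closedBall_eq_Icc, Real.closedBall_eq_Icc,
    dyadicSquare]
  congr 2 <;> field_simp <;> ring

theorem dyadicSquare_succ_subset (l i j : ℕ) {a b : ℕ} (ha : a ≤ 1) (hb : b ≤ 1) :
    dyadicSquare (l + 1) (2 * i + a) (2 * j + b) ⊆ dyadicSquare l i j := by
  have ha' : (a : ℝ) ≤ 1 := by exact_mod_cast ha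
  have hb' : (b : ℝ) ≤ 1 := by exact_mod_cast hb
  refine prod_mono (Icc_subset_Icc ?_ ?_) (Icc_subset_Icc ?_ ?_) <;>
    rw [pow_succ] <;> field_simp <;> push_cast <;> linarith

theorem scalingFun_eq_indicator (l i j : ℕ) :
    scalingFun l i j = (dyadicSquare l i j).indicator (fun _ => 2 ^ (2 * l)) := by
  ext x
  have hpos : (0 : ℝ) < 2 ^ l := by positivity
  have hmem : (2 ^ l * x.1 - i, 2 ^ l * x.2 - j) ∈ Icc (0 : ℝ) 1 ×ˢ Icc (0 : ℝ) 1 ↔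
      x ∈ dyadicSquare l i j := by
    simp only [dyadicSquare, mem_prod, mem_Icc, div_le_iff₀ hpos, le_div_iff₀ hpos]
    constructor <;> rintro ⟨⟨h₁, h₂⟩, h₃, h₄⟩ <;> refine ⟨⟨?_, ?_⟩, ?_, ?_⟩ <;> linarith
  by_cases hx : x ∈ dyadicSquare l i j
  · rw [scalingFun, indicator_of_mem (hmem.2 hx), indicator_of_mem hx, mul_one]
  · rw [scalingFun, indicator_of_notMem (mt hmem.1 hx), indicator_of_notMem hx, mul_zero]

theorem scalingFun_nonneg (l i j : ℕ) (x : ℝ × ℝ) : 0 ≤ scalingFun l i j x := by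
  rw [scalingFun_eq_indicator]
  exact indicator_nonneg (fun _ _ => by positivity) x

theorem integral_scalingFun (l i j : ℕ) : ∫ x, scalingFun l i j x = 1 := by
  rw [scalingFun_eq_indicator, integral_indicator_const _ (measurableSet_dyadicSquare l i j),
    volume_real_dyadicSquare, smul_eq_mul, two_mul, pow_add]
  field_simp

theorem integrable_mul_scalingFun {u : ℝ × ℝ → ℝ} (hu : Continuous u) (l i j : ℕ) :
    Integrable (fun x => u x * scalingFun l i j x) := by
  simp_rw [scalingFun_eq_indicator, ← indicator_mul_right]
  rw [integrable_indicator_iff (measurableSet_dyadicSquare l i j)]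
  exact (hu.mul continuous_const).continuousOn.integrableOn_compact (isCompact_dyadicSquare l i j)

theorem abs_integral_mul_scalingFun_sub_le {u : ℝ × ℝ → ℝ} (hu : Continuous u) {l i j : ℕ}
    {c M : ℝ} (h : ∀ x ∈ dyadicSquare l i j, |u x - c| ≤ M) :
    |(∫ x, u x * scalingFun l i j x) - c| ≤ M := by
  refine abs_integral_mul_sub_le_of_integral_eq_one (scalingFun_nonneg l i j)
    (by simpa using integrable_mul_scalingFun (u := fun _ => 1) continuous_const l i j)
    (integral_scalingFun l i j) (integrable_mul_scalingFun hu l i j) fun x hx => h x ?_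
  rw [scalingFun_eq_indicator] at hx
  exact mem_of_indicator_ne_zero hx

theorem integral_mul_waveletFun {u : ℝ × ℝ → ℝ} (hu : Continuous u) (l i j : ℕ) (e : ℕ × ℕ) :
    ∫ x, u x * waveletFun l i j e x =
      ∑ a ∈ (({0, 1} : Finset ℕ) ×ˢ ({0, 1} : Finset ℕ)),
        (1 / 4 : ℝ) * (-1 : ℝ) ^ (a.1 * e.1 + a.2 * e.2) *
          ∫ x, u x * scalingFun (l + 1) (2 * i + a.1) (2 * j + a.2) x := by
  simp_rw [waveletFun, Finset.mul_sum, mul_left_comm (u _)]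
  rw [integral_finsetSum _ fun a _ => (integrable_mul_scalingFun hu _ _ _).const_mul _]
  simp_rw [integral_const_mul]

theorem sum_waveletWeight_eq_zero {e : ℕ × ℕ}
    (he : e ∈ (({0, 1} : Finset ℕ) ×ˢ ({0, 1} : Finset ℕ))) (hne : e ≠ (0, 0)) :
    ∑ a ∈ (({0, 1} : Finset ℕ) ×ˢ ({0, 1} : Finset ℕ)),
      (1 / 4 : ℝ) * (-1 : ℝ) ^ (a.1 * e.1 + a.2 * e.2) = 0 := by
  obtain ⟨e₁, e₂⟩ := e
  simp only [Finset.mem_product, Finset.mem_insert, Finset.mem_singleton] at he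
  rw [Finset.sum_product]
  rcases he with ⟨rfl | rfl, rfl | rfl⟩
  · exact absurd rfl hne
  all_goals norm_num [Finset.sum_pair]

theorem sum_abs_waveletWeight (e : ℕ × ℕ) :
    ∑ a ∈ (({0, 1} : Finset ℕ) ×ˢ ({0, 1} : Finset ℕ)),
      |(1 / 4 : ℝ) * (-1 : ℝ) ^ (a.1 * e.1 + a.2 * e.2)| = 1 := by
  simp only [abs_mul, abs_pow, abs_neg, abs_one, one_pow, mul_one]
  norm_num

theorem detail_cancellation_lipschitz_general (u : ℝ × ℝ → ℝ) (C : ℝ) (hC : 0 ≤ C)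
    (hLip : ∀ x y : ℝ × ℝ, |u x - u y| ≤ C * dist x y)
    (l i j : ℕ)
    (e : ℕ × ℕ) (he : e ∈ (({0, 1} : Finset ℕ) ×ˢ ({0, 1} : Finset ℕ)))
    (hne : e ≠ (0, 0)) :
    |∫ x : ℝ × ℝ, u x * waveletFun l i j e x| ≤ C * Real.sqrt 2 / 2 ^ (l + 1) := by
  have hu : Continuous u := (LipschitzWith.of_dist_le' fun x y => hLip x y).continuous
  have hchild : ∀ a ∈ (({0, 1} : Finset ℕ) ×ˢ ({0, 1} : Finset ℕ)),
      |(∫ x, u x * scalingFun (l + 1) (2 * i + a.1) (2 * j + a.2) x) - u (dyadicCenter l i j)|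
        ≤ C / 2 ^ (l + 1) := by
    intro a ha
    simp only [Finset.mem_product, Finset.mem_insert, Finset.mem_singleton] at ha
    refine abs_integral_mul_scalingFun_sub_le hu fun x hx => ?_
    have hball := dyadicSquare_eq_closedBall l i j ▸
      dyadicSquare_succ_subset l i j (by omega) (by omega) hx
    calc |u x - u (dyadicCenter l i j)| ≤ C * dist x (dyadicCenter l i j) := hLip _ _
      _ ≤ C * (1 / 2 ^ (l + 1)) := mul_le_mul_of_nonneg_left (mem_closedBall.1 hball) hC
      _ = C / 2 ^ (l + 1) := mul_one_div C _
  rw [integral_mul_waveletFun hu]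
  calc _ ≤ _ := abs_sum_mul_le_of_sum_eq_zero _ (sum_waveletWeight_eq_zero he hne) hchild
    _ = C / 2 ^ (l + 1) := by rw [sum_abs_waveletWeight, one_mul]
    _ ≤ C * Real.sqrt 2 / 2 ^ (l + 1) := by
      gcongr
      exact le_mul_of_one_le_right hC (Real.one_le_sqrt.2 one_le_two)

/-- Cancellation property: if `u` is Lipschitz with constant `C`, then every
detail coefficient satisfies `|d_{(i,j),e,l}| ≤ C √2 · 2^{-(l+1)}` for
`e ∈ {0,1}² \ {(0,0)}`. -/
theorem detail_cancellation_lipschitz (u : ℝ × ℝ → ℝ) (C : ℝ) (hC : 0 ≤ C)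
    (hLip : ∀ x y : ℝ × ℝ, |u x - u y| ≤ C * dist x y)
    (l i j : ℕ) (hi : i ∈ Finset.range (2 ^ l)) (hj : j ∈ Finset.range (2 ^ l))
    (e : ℕ × ℕ) (he : e ∈ (({0, 1} : Finset ℕ) ×ˢ ({0, 1} : Finset ℕ)))
    (hne : e ≠ (0, 0)) :
    |∫ x : ℝ × ℝ, u x * waveletFun l i j e x| ≤ C * Real.sqrt 2 / 2 ^ (l + 1) :=
  detail_cancellation_lipschitz_general u C hC hLip l i j e he hne
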